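/- arXiv:1804.10350 — 8 statements merged into one kernel-verified Lean document; each statement's English description precedes it below -/
import Mathlib

section
/- Call a matrix $(\lambda_{i,j})_{i,j\in\mathbb{N}}$ with entries in $[0,1]$ convex if $\sum_{j}\lambda_{i,j}=1$ for every $i$ (each row finitely supported or summable), and null if $\lim_{i\to\infty}\lambda_{i,j}=0$ for every $j$. Let $(N_r)_{r\in\mathbb{N}}$ be a sequence of subsets of $\mathbb{N}$ and $(\lambda_{i,j})$ a convex null matrix such that $\lim_{i\to\infty}\sum_{j\in N_r}\lambda_{i,j}=0$ for every $r$. Then there exists an infinite set $N'\subseteq\mathbb{N}$ such that $N'\cap N_r$ is finite for every $r$ and $\limsup_{i\to\infty}\sum_{j\in N'}\lambda_{i,j}\ge 1/2$. -/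
open Filter Topology

/-- Lemma 4.2: given a convex null matrix whose sums over each `N r` tend to `0`,
there is an infinite `N'` almost disjoint from every `N r` such that the sums over
`N'` have limsup at least `1/2`. -/
theorem stmt2 (l : ℕ → ℕ → ℝ) (hnn : ∀ i j, 0 ≤ l i j)
    (hrow : ∀ i, HasSum (l i) 1)
    (hnull : ∀ j, Tendsto (fun i => l i j) atTop (𝓝 0))
    (N : ℕ → Set ℕ)
    (hN : ∀ r, Tendsto (fun i => ∑' j, Set.indicator (N r) (l i) j) atTop (𝓝 0)) :
    ∃ N' : Set ℕ, N'.Infinite ∧ (∀ r, (N' ∩ N r).Finite) ∧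
      (1 / 2 : ℝ) ≤ Filter.limsup (fun i => ∑' j, Set.indicator N' (l i) j) atTop := by
  classical
  have hsumm : ∀ i, Summable (l i) := fun i => (hrow i).summable
  set M : ℕ → Set ℕ := fun k => ⋃ r ∈ Finset.range (k+1), N r with hMdef
  have hNM : ∀ r k, r ≤ k → N r ⊆ M k := by
    intro r k hrk x hx
    exact Set.mem_biUnion (Finset.mem_range.2 (Nat.lt_succ_of_le hrk)) hx
  -- sums over M k tend to 0
  have hMtend : ∀ k, Tendsto (fun i => ∑' j, Set.indicator (M k) (l i) j) atTop (𝓝 0) := by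
    intro k
    have hnng : ∀ i, 0 ≤ ∑' j, Set.indicator (M k) (l i) j := fun i =>
      tsum_nonneg fun j => Set.indicator_apply_nonneg fun _ => hnn i j
    refine squeeze_zero hnng (g := fun i => ∑ r ∈ Finset.range (k+1),
        ∑' j, Set.indicator (N r) (l i) j) ?_ ?_
    · intro i
      have hle : ∀ j, Set.indicator (M k) (l i) j ≤
          ∑ r ∈ Finset.range (k+1), Set.indicator (N r) (l i) j := by
        intro j
        by_cases hj : j ∈ M k
        · obtain ⟨r, hr, hjr⟩ : ∃ r ∈ Finset.range (k+1), j ∈ N r := by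
            simpa [hMdef] using hj
          calc Set.indicator (M k) (l i) j = Set.indicator (N r) (l i) j := by
                rw [Set.indicator_of_mem hj, Set.indicator_of_mem hjr]
            _ ≤ _ := Finset.single_le_sum
                (fun s _ => Set.indicator_apply_nonneg fun _ => hnn i j) hr
        · rw [Set.indicator_of_notMem hj]
          exact Finset.sum_nonneg fun s _ =>
            Set.indicator_apply_nonneg fun _ => hnn i j
      calc ∑' j, Set.indicator (M k) (l i) j
          ≤ ∑' j, ∑ r ∈ Finset.range (k+1), Set.indicator (N r) (l i) j :=
            Summable.tsum_le_tsum hle ((hsumm i).indicator _)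
              (summable_sum fun r _ => (hsumm i).indicator _)
        _ = _ := Summable.tsum_finsetSum fun r _ => (hsumm i).indicator _
    · have := tendsto_finset_sum (Finset.range (k+1))
        (fun r _ => hN r)
      simpa using this
  -- the key step lemma
  have step : ∀ (k m : ℕ) (P : Finset ℕ), ∃ i B, m < i ∧ (∀ j ∈ (B : Finset ℕ), j ∉ M k) ∧
      (∀ j ∈ B, j ∉ P) ∧ (1/2 : ℝ) ≤ ∑ j ∈ B, l i j := by
    intro k m P
    have hP : Tendsto (fun i => ∑ j ∈ P, l i j) atTop (𝓝 0) := by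
      have := tendsto_finset_sum P (fun j _ => hnull j)
      simpa using this
    have hev : ∀ᶠ i in atTop, (∑' j, Set.indicator (M k) (l i) j) < 1/6 ∧
        (∑ j ∈ P, l i j) < 1/6 ∧ m < i :=
      (((hMtend k).eventually (gt_mem_nhds (by norm_num : (0:ℝ) < 1/6))).and
        (((hP).eventually (gt_mem_nhds (by norm_num : (0:ℝ) < 1/6))).and
          (eventually_gt_atTop m)))
    obtain ⟨i, h1, h2, h3⟩ := hev.exists
    obtain ⟨F, hF⟩ : ∃ F : Finset ℕ, (5/6 : ℝ) < ∑ j ∈ F, l i j :=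
      ((hrow i).eventually (lt_mem_nhds (by norm_num : (5/6:ℝ) < 1))).exists
    refine ⟨i, F.filter (fun j => j ∉ M k ∧ j ∉ P), h3, ?_, ?_, ?_⟩
    · intro j hj; exact ((Finset.mem_filter.1 hj).2).1
    · intro j hj; exact ((Finset.mem_filter.1 hj).2).2
    · have hsplit := Finset.sum_filter_add_sum_filter_not F
        (fun j => j ∉ M k ∧ j ∉ P) (l i)
      have hbad : ∑ j ∈ F.filter (fun j => ¬(j ∉ M k ∧ j ∉ P)), l i j ≤ 1/6 + 1/6 := by
        have hpt : ∀ j ∈ F.filter (fun j => ¬(j ∉ M k ∧ j ∉ P)),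
            l i j ≤ Set.indicator (M k) (l i) j + Set.indicator (↑P) (l i) j := by
          intro j hj
          have hj' := (Finset.mem_filter.1 hj).2
          push_neg at hj'
          by_cases hM : j ∈ M k
          · rw [Set.indicator_of_mem hM]
            have : 0 ≤ Set.indicator (↑P : Set ℕ) (l i) j :=
              Set.indicator_apply_nonneg fun _ => hnn i j
            linarith
          · have hjP : j ∈ (↑P : Set ℕ) := by simpa using hj' hM
            rw [Set.indicator_of_notMem hM, Set.indicator_of_mem hjP]
            simp
        calc ∑ j ∈ F.filter (fun j => ¬(j ∉ M k ∧ j ∉ P)), l i j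
            ≤ ∑ j ∈ F.filter (fun j => ¬(j ∉ M k ∧ j ∉ P)),
                (Set.indicator (M k) (l i) j + Set.indicator (↑P) (l i) j) :=
              Finset.sum_le_sum hpt
          _ = ∑ j ∈ F.filter (fun j => ¬(j ∉ M k ∧ j ∉ P)), Set.indicator (M k) (l i) j
              + ∑ j ∈ F.filter (fun j => ¬(j ∉ M k ∧ j ∉ P)), Set.indicator (↑P) (l i) j :=
              Finset.sum_add_distrib
          _ ≤ 1/6 + 1/6 := by
              gcongr
              · refine le_of_lt (lt_of_le_of_lt ?_ h1)
                exact Summable.sum_le_tsum _ (fun j _ =>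
                  Set.indicator_apply_nonneg fun _ => hnn i j) ((hsumm i).indicator _)
              · refine le_of_lt (lt_of_le_of_lt ?_ h2)
                rw [sum_eq_tsum_indicator (l i) P]
                exact Summable.sum_le_tsum _ (fun j _ =>
                  Set.indicator_apply_nonneg fun _ => hnn i j) ((hsumm i).indicator _)
      linarith
    -- choose functions
  choose I B hI hBM hBP hBsum using step
  -- recursive construction: g k = (index, block, accumulated), with a dummy stage 0
  let g : ℕ → ℕ × Finset ℕ × Finset ℕ :=
    fun n => Nat.rec ((0:ℕ), (∅:Finset ℕ), (∅:Finset ℕ))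
      (fun k p => (I k p.1 p.2.2, B k p.1 p.2.2, p.2.2 ∪ B k p.1 p.2.2)) n
  have hg : ∀ k, g (k+1) = (I k (g k).1 (g k).2.2, B k (g k).1 (g k).2.2,
      (g k).2.2 ∪ B k (g k).1 (g k).2.2) := fun k => rfl
  set idx : ℕ → ℕ := fun k => (g (k+1)).1 with hidx
  set blk : ℕ → Finset ℕ := fun k => (g (k+1)).2.1 with hblk
  set acc : ℕ → Finset ℕ := fun k => (g (k+1)).2.2 with hacc
  have hblkM : ∀ k, ∀ j ∈ blk k, j ∉ M k := fun k => hBM k (g k).1 (g k).2.2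
  have hblkP : ∀ k, ∀ j ∈ blk k, j ∉ (g k).2.2 := fun k => hBP k (g k).1 (g k).2.2
  have hblksum : ∀ k, (1/2 : ℝ) ≤ ∑ j ∈ blk k, l (idx k) j := fun k =>
    hBsum k (g k).1 (g k).2.2
  have haccsucc : ∀ k, acc (k+1) = acc k ∪ blk (k+1) := fun k => rfl
  have hblkacc : ∀ k, blk k ⊆ acc k := by
    intro k
    cases k with
    | zero => intro x hx; exact Finset.mem_union_right _ hx
    | succ n => rw [haccsucc]; exact Finset.subset_union_right
  have haccmono : ∀ k m, k ≤ m → acc k ⊆ acc m := by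
    intro k m hkm
    induction m with
    | zero => simp [Nat.le_zero.1 hkm]
    | succ n ih =>
      rcases Nat.lt_or_ge k (n+1) with h | h
      · exact (ih (Nat.lt_succ_iff.1 h)).trans
          (by rw [haccsucc]; exact Finset.subset_union_left)
      · have : k = n + 1 := le_antisymm hkm h
        subst this; exact Finset.Subset.refl _
  have hblkaccmono : ∀ k m, k ≤ m → blk k ⊆ acc m :=
    fun k m hkm => (hblkacc k).trans (haccmono k m hkm)
  -- blk (m+1) is disjoint from acc m
  have hdisj : ∀ m, ∀ j ∈ blk (m+1), j ∉ acc m := fun m => hblkP (m+1)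
  -- strict monotonicity of idx
  have hidxlt : ∀ k, idx k < idx (k+1) := by
    intro k
    have h := hI (k+1) (g (k+1)).1 (g (k+1)).2.2
    exact h
  have hidxmono : StrictMono idx := strictMono_nat_of_lt_succ hidxlt
  -- blocks nonempty
  have hne : ∀ k, ∃ x, x ∈ blk k := by
    intro k
    by_contra h
    push_neg at h
    have hemp : blk k = ∅ := Finset.eq_empty_of_forall_notMem h
    have h0 : ∑ j ∈ blk k, l (idx k) j = 0 := by rw [hemp]; simp
    have := hblksum k
    rw [h0] at this
    linarith
  choose pick hpick using hne
  refine ⟨⋃ k, (blk k : Set ℕ), ?_, ?_, ?_⟩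
  · -- infinite
    refine Set.infinite_of_injective_forall_mem (f := pick) ?_ ?_
    · intro a b hab
      by_contra hne'
      rcases Nat.lt_or_ge a b with h | h
      · obtain ⟨m, rfl⟩ := Nat.exists_eq_add_of_lt h
        have h1 : pick a ∈ acc (a + m) := hblkaccmono a (a+m) (Nat.le_add_right a m) (hpick a)
        have h2 := hdisj (a+m) _ (hpick (a+m+1))
        rw [← hab] at h2
        exact h2 h1
      · have h' : b < a := lt_of_le_of_ne h (Ne.symm hne')
        obtain ⟨m, rfl⟩ := Nat.exists_eq_add_of_lt h'
        have h1 : pick b ∈ acc (b + m) := hblkaccmono b (b+m) (Nat.le_add_right b m) (hpick b)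
        have h2 := hdisj (b+m) _ (hpick (b+m+1))
        rw [hab] at h2
        exact h2 h1
    · intro k
      exact Set.mem_iUnion.2 ⟨k, hpick k⟩
  · -- almost disjoint
    intro r
    apply Set.Finite.subset (acc r).finite_toSet
    rintro x ⟨hx1, hx2⟩
    obtain ⟨k, hk⟩ := Set.mem_iUnion.1 hx1
    rcases Nat.lt_or_ge r k with h | h
    · exact absurd (hNM r k h.le hx2) (hblkM k x hk)
    · exact hblkaccmono k r h hk
  · -- limsup
    have hbound : ∀ i, (∑' j, Set.indicator (⋃ k, (blk k : Set ℕ)) (l i) j) ≤ 1 := by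
      intro i
      calc (∑' j, Set.indicator (⋃ k, (blk k : Set ℕ)) (l i) j)
          ≤ ∑' j, l i j := Summable.tsum_le_tsum
            (fun j => Set.indicator_apply_le' (fun _ => le_refl _) (fun _ => hnn i j))
            ((hsumm i).indicator _) (hsumm i)
        _ = 1 := (hrow i).tsum_eq
    have hlow : ∀ k, (1/2 : ℝ) ≤ ∑' j, Set.indicator (⋃ k, (blk k : Set ℕ)) (l (idx k)) j := by
      intro k
      refine le_trans (hblksum k) ?_
      have heq : ∀ j ∈ blk k, l (idx k) j =
          Set.indicator (⋃ k, (blk k : Set ℕ)) (l (idx k)) j := by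
        intro j hj
        rw [Set.indicator_of_mem (Set.mem_iUnion.2 ⟨k, hj⟩)]
      rw [Finset.sum_congr rfl heq]
      exact Summable.sum_le_tsum _ (fun j _ => Set.indicator_apply_nonneg fun _ => hnn _ j)
        ((hsumm _).indicator _)
    refine le_limsup_of_frequently_le ?_ ?_
    · rw [frequently_atTop]
      intro a
      exact ⟨idx a, le_trans hidxmono.le_apply le_rfl, hlow a⟩
    · exact ⟨1, eventually_map.2 (Eventually.of_forall hbound)⟩
end

section
/- Let $X$ be a Banach space such that every element of $X^{**}$ is the weak*-limit of a sequence from $X$ (i.e., $X$ is weak*-sequentially dense in $X^{**}$). Then $X$ contains no isomorphic copy of $\ell_1$. -/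
/-!
Suppose `T : ℓ¹ → X` is an isomorphic embedding, `c ‖v‖ ≤ ‖T v‖`, and let `Φ ∈ X**` be the limit
of the `T eₖ` along a nonprincipal ultrafilter `U`. On the weak* compact set `K` of functionals of
norm at most `1 / c` taking only the values `0, 1` at the `T eₖ`, Hahn–Banach makes
`g ↦ (g (T eₖ))ₖ` a continuous surjection onto the Cantor cube, and `Φ g` is `1` or `0` according
as `{k | g (T eₖ) = 1}` belongs to `U` or not. A weak* limit of a sequence from `X` would make `Φ` a
pointwise limit of continuous functions on `K`. Restricted to a minimal closed subset of `K` still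
mapping onto the cube, such a function oscillates by at most `1 / 2` (Baire) over some nonempty
open subset of the cube; but every cylinder contains sequences that are eventually `1` and
sequences that are eventually `0`, where `Φ` takes the values `1` and `0`.
-/

open Filter Topology Set Metric

theorem exists_isOpen_forall_dist_le_of_tendsto {K Y : Type*} [TopologicalSpace K] [BaireSpace K]
    [Nonempty K] [PseudoMetricSpace Y] {f : K → Y} {F : ℕ → K → Y} (hF : ∀ n, Continuous (F n))
    (hlim : ∀ x, Tendsto (fun n => F n x) atTop (𝓝 (f x))) {ε : ℝ} (hε : 0 < ε) :
    ∃ O : Set K, IsOpen O ∧ O.Nonempty ∧ ∀ x ∈ O, ∀ y ∈ O, dist (f x) (f y) ≤ ε := by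
  set C : ℕ → Set K := fun n => {x | ∀ m ≥ n, dist (F m x) (F n x) ≤ ε / 4}
  have hC : ∀ n, IsClosed (C n) := fun n => by
    simp only [C, ofPred_forall]
    exact isClosed_biInter fun m _ => isClosed_le ((hF m).dist (hF n)) continuous_const
  have hcover : ⋃ n, C n = univ := eq_univ_of_forall fun x => by
    obtain ⟨n, hn⟩ := Metric.cauchySeq_iff'.mp (hlim x).cauchySeq (ε / 4) (by positivity)
    exact mem_iUnion.mpr ⟨n, fun m hm => (hn m hm).le⟩
  obtain ⟨n, x₀, hx₀⟩ := nonempty_interior_of_iUnion_of_closed hC hcover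
  have hclose : ∀ x ∈ C n, dist (f x) (F n x) ≤ ε / 4 := fun x hx =>
    le_of_tendsto ((hlim x).dist tendsto_const_nhds) (eventually_atTop.mpr ⟨n, hx⟩)
  refine ⟨interior (C n) ∩ F n ⁻¹' ball (F n x₀) (ε / 4),
    isOpen_interior.inter (isOpen_ball.preimage (hF n)), ⟨x₀, hx₀, mem_ball_self (by positivity)⟩,
    fun x ⟨hxC, hxB⟩ y ⟨hyC, hyB⟩ => ?_⟩
  rw [mem_preimage, mem_ball] at hxB hyB
  calc dist (f x) (f y) ≤ dist (f x) (F n x) + dist (F n x) (F n y) + dist (F n y) (f y) :=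
        dist_triangle4 _ _ _ _
    _ ≤ ε / 4 + (dist (F n x) (F n x₀) + dist (F n y) (F n x₀)) + ε / 4 := by
        rw [dist_comm (F n y) (f y)]
        gcongr
        exacts [hclose x (interior_subset hxC), dist_triangle_right _ _ _,
          hclose y (interior_subset hyC)]
    _ ≤ ε := by linarith

universe u

theorem exists_image_eq_inter_range_forall_dist_le {K : Type u} {Y Z : Type*}
    [TopologicalSpace K] [CompactSpace K] [T2Space K] [Nonempty K] [TopologicalSpace Y]
    [T2Space Y] [PseudoMetricSpace Z] {ρ : K → Y} (hρ : Continuous ρ) {f : K → Z}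
    {F : ℕ → K → Z} (hF : ∀ n, Continuous (F n))
    (hlim : ∀ x, Tendsto (fun n => F n x) atTop (𝓝 (f x))) {ε : ℝ} (hε : 0 < ε) :
    ∃ W : Set Y, IsOpen W ∧ (W ∩ range ρ).Nonempty ∧
      ∃ E : Set K, ρ '' E = W ∩ range ρ ∧ ∀ x ∈ E, ∀ y ∈ E, dist (f x) (f y) ≤ ε := by
  -- `range ρ`, rebuilt in the universe of `K` as `exists_compact_surjective_zorn_subset` requires
  let A := Quotient (Setoid.ker ρ)
  let π : K → A := Quotient.mk _
  have hπρ : ∀ {x y}, π x = π y → ρ x = ρ y := Quotient.exact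
  have : T1Space A := ⟨fun q => Quotient.inductionOn q fun x => by
    rw [← isQuotientMap_quotient_mk'.isClosed_preimage]
    convert (isClosed_singleton (x := ρ x)).preimage hρ
    ext z
    exact ⟨hπρ, fun h => Quotient.sound h⟩⟩
  obtain ⟨E, hE, hπE, hEmin⟩ := exists_compact_surjective_zorn_subset (A := A)
    continuous_quotient_mk' Quotient.mk_surjective
  have hlift : ∀ z, ∃ x ∈ E, ρ x = ρ z := fun z => by
    obtain ⟨x, hx, hxz⟩ := hπE.symm ▸ mem_univ (π z)
    exact ⟨x, hx, hπρ hxz⟩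
  have : Nonempty E := by
    obtain ⟨x, hx, -⟩ := hlift (Classical.arbitrary K)
    exact ⟨⟨x, hx⟩⟩
  obtain ⟨O, hO, ⟨x₀, hx₀⟩, hosc⟩ := exists_isOpen_forall_dist_le_of_tendsto
    (K := E) (f := f ∘ Subtype.val) (fun n => (hF n).comp continuous_subtype_val)
    (fun x => hlim x) hε
  obtain ⟨a, ha⟩ := (ne_univ_iff_exists_notMem _).mp <|
    hEmin Oᶜ (fun h => (h ▸ mem_univ x₀ : x₀ ∈ Oᶜ) hx₀) hO.isClosed_compl
  let W : Set Y := (ρ ∘ Subtype.val '' Oᶜ)ᶜ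
  refine ⟨W, ?_, ?_, {x | x ∈ E ∧ ρ x ∈ W}, ?_, ?_⟩
  · exact (hO.isClosed_compl.isCompact.image (hρ.comp continuous_subtype_val)).isClosed.isOpen_compl
  · obtain ⟨z, rfl⟩ := Quotient.exists_rep a
    refine ⟨ρ z, fun ⟨w, hw, hwz⟩ => ha ⟨w, hw, Quotient.sound hwz⟩, z, rfl⟩
  · ext y
    constructor
    · rintro ⟨x, ⟨-, hxW⟩, rfl⟩
      exact ⟨hxW, x, rfl⟩
    · rintro ⟨hyW, z, rfl⟩
      obtain ⟨x, hx, hxz⟩ := hlift z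
      exact ⟨x, ⟨hx, hxz ▸ hyW⟩, hxz⟩
  · have hmem : ∀ x (hx : x ∈ E), ρ x ∈ W → (⟨x, hx⟩ : E) ∈ O := fun x hx hxW =>
      by_contra fun h => hxW ⟨⟨x, hx⟩, h, rfl⟩
    rintro x ⟨hxE, hxW⟩ y ⟨hyE, hyW⟩
    exact hosc _ (hmem x hxE hxW) _ (hmem y hyE hyW)

theorem not_forall_tendsto_of_range_eq_pi {K : Type*} [TopologicalSpace K] [CompactSpace K]
    [T2Space K] {ρ : K → ℕ → ℝ} (hρ : Continuous ρ) (hrange : range ρ = univ.pi fun _ => {0, 1})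
    {U : Ultrafilter ℕ} (hU : (U : Filter ℕ) ≤ cofinite) {f : K → ℝ}
    (hf : ∀ x, Tendsto (fun k => ρ x k) U (𝓝 (f x))) {F : ℕ → K → ℝ}
    (hF : ∀ n, Continuous (F n)) : ¬ ∀ x, Tendsto (fun n => F n x) atTop (𝓝 (f x)) := by
  intro hlim
  have : Nonempty K := by
    obtain ⟨x, -⟩ : (0 : ℕ → ℝ) ∈ range ρ := by simp [hrange]
    exact ⟨x⟩
  obtain ⟨W, hW, ⟨a, haW, ha⟩, E, hEW, hosc⟩ :=
    exists_image_eq_inter_range_forall_dist_le hρ hF hlim one_half_pos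
  obtain ⟨I, u, hu, hIW⟩ := isOpen_pi_iff.mp hW a haW
  rw [hrange] at hEW ha
  have hlift : ∀ b : ℕ → ℝ, (∀ k, b k ∈ ({0, 1} : Set ℝ)) → (∀ i ∈ I, b i = a i) →
      ∃ x ∈ E, ρ x = b := fun b hb hba => by
    have : b ∈ ρ '' E := hEW ▸ ⟨hIW fun i hi => hba i hi ▸ (hu i hi).2, fun k _ => hb k⟩
    simpa using this
  have hval : ∀ x r, (∀ᶠ k in cofinite, ρ x k = r) → f x = r := fun x r h =>
    tendsto_nhds_unique (hf x) (tendsto_const_nhds.congr' (EventuallyEq.symm (hU h)))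
  have hpatch : ∀ c ∈ ({0, 1} : Set ℝ), ∃ x ∈ E, f x = c := fun c hc => by
    classical
    obtain ⟨x, hx, hxa⟩ := hlift (I.piecewise a fun _ => c)
      (fun k => by by_cases hk : k ∈ I <;> simp [hk, ha k (mem_univ k), hc])
      (fun i hi => I.piecewise_eq_of_mem _ _ hi)
    refine ⟨x, hx, hval x c (I.eventually_cofinite_notMem.mono fun k hk => ?_)⟩
    rw [hxa, I.piecewise_eq_of_notMem _ _ hk]
  obtain ⟨x₁, hx₁, h₁⟩ := hpatch 1 (by simp)
  obtain ⟨x₀, hx₀, h₀⟩ := hpatch 0 (by simp)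
  have := hosc x₁ hx₁ x₀ hx₀
  rw [h₁, h₀] at this
  norm_num at this

theorem exists_forall_apply_tendsto_ultrafilter {𝕜 X ι : Type*} [RCLike 𝕜] [NormedAddCommGroup X]
    [NormedSpace 𝕜 X] (U : Ultrafilter ι) {y : ι → X} {M : ℝ} (hy : ∀ i, ‖y i‖ ≤ M) :
    ∃ F : StrongDual 𝕜 (StrongDual 𝕜 X), ∀ g : StrongDual 𝕜 X,
      Tendsto (fun i => g (y i)) U (𝓝 (F g)) := by
  let φ : ι → StrongDual 𝕜 (StrongDual 𝕜 X) := fun i =>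
    NormedSpace.inclusionInDoubleDual 𝕜 X (y i)
  have hφ : ∀ i, φ i ∈ closedBall 0 M := fun i =>
    (mem_closedBall_zero_iff (E := StrongDual 𝕜 (StrongDual 𝕜 X))).mpr
      ((NormedSpace.double_dual_bound 𝕜 X (y i)).trans (hy i))
  obtain ⟨F, -, hF⟩ := (WeakDual.isCompact_closedBall 0 M).ultrafilter_le_nhds
    (U.map (StrongDual.toWeakDual ∘ φ)) (le_principal_iff.mpr (mem_map.mpr (univ_mem' hφ)))
  exact ⟨WeakDual.toStrongDual F, tendsto_iff_forall_eval_tendsto_topDualPairing.mp hF⟩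

theorem exists_strongDual_comp_eq {𝕜 E F : Type*} [NontriviallyNormedField 𝕜]
    [IsRCLikeNormedField 𝕜] [NormedAddCommGroup E] [NormedSpace 𝕜 E] [NormedAddCommGroup F]
    [NormedSpace 𝕜 F] (T : E →L[𝕜] F) {c : ℝ} (hc : 0 < c) (hT : ∀ v, c * ‖v‖ ≤ ‖T v‖)
    (φ : StrongDual 𝕜 E) : ∃ g : StrongDual 𝕜 F, g.comp T = φ ∧ ‖g‖ ≤ ‖φ‖ / c := by
  have hinj : Function.Injective T := fun v w h => by
    have := hT (v - w)
    rw [map_sub, h, sub_self, norm_zero] at this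
    exact sub_eq_zero.mp (norm_le_zero_iff.mp (nonpos_of_mul_nonpos_right this hc))
  let e := LinearEquiv.ofInjective (T : E →ₗ[𝕜] F) hinj
  have hbound : ∀ y, ‖φ (e.symm y)‖ ≤ ‖φ‖ / c * ‖y‖ := fun y => calc
    ‖φ (e.symm y)‖ ≤ ‖φ‖ * ‖e.symm y‖ := φ.le_opNorm _
    _ ≤ ‖φ‖ * (‖y‖ / c) := by
      gcongr
      rw [le_div_iff₀' hc]
      have hTe : T (e.symm y) = y := LinearEquiv.ofInjective_symm_apply (f := (T : E →ₗ[𝕜] F)) y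
      have := hT (e.symm y)
      rwa [hTe] at this
    _ = ‖φ‖ / c * ‖y‖ := by ring
  obtain ⟨g, hg, hgnorm⟩ := exists_extension_norm_eq _
    ((φ.toLinearMap.comp e.symm.toLinearMap).mkContinuous _ hbound)
  refine ⟨g, ContinuousLinearMap.ext fun v => ?_, ?_⟩
  · change g (e v) = φ v
    simpa using hg (e v)
  · exact hgnorm ▸ LinearMap.mkContinuous_norm_le _ (by positivity) _

theorem exists_lp_one_dual_apply_single {α : Type*} [DecidableEq α] {b : α → ℝ} {C : ℝ}
    (hC : 0 ≤ C) (hb : ∀ k, ‖b k‖ ≤ C) :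
    ∃ φ : StrongDual ℝ (lp (fun _ : α => ℝ) 1), ‖φ‖ ≤ C ∧ ∀ k, φ (lp.single 1 k 1) = b k := by
  have hv : ∀ v : lp (fun _ : α => ℝ) 1, Summable fun k => ‖v k‖ := fun v => by
    simpa using v.2.summable
  have hs : ∀ v : lp (fun _ : α => ℝ) 1, Summable fun k => b k * v k := fun v =>
    .of_norm_bounded ((hv v).mul_left C) fun k => by
      rw [norm_mul]; exact mul_le_mul_of_nonneg_right (hb k) (norm_nonneg _)
  let φ : lp (fun _ : α => ℝ) 1 →ₗ[ℝ] ℝ :=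
    { toFun v := ∑' k, b k * v k
      map_add' v w := by
        simp only [lp.coeFn_add, Pi.add_apply, mul_add]
        exact (hs v).tsum_add (hs w)
      map_smul' a v := by simp [lp.coeFn_smul, mul_left_comm, tsum_mul_left] }
  have hφ : ∀ v, ‖φ v‖ ≤ C * ‖v‖ := fun v => calc
    ‖∑' k, b k * v k‖ ≤ ∑' k, ‖b k * v k‖ := norm_tsum_le_tsum_norm (hs v).norm
    _ ≤ ∑' k, C * ‖v k‖ := (hs v).norm.tsum_le_tsum (fun k => by
          rw [norm_mul]; exact mul_le_mul_of_nonneg_right (hb k) (norm_nonneg _))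
        ((hv v).mul_left C)
    _ = C * ‖v‖ := by rw [tsum_mul_left, lp.norm_eq_tsum_rpow (by norm_num)]; simp
  refine ⟨φ.mkContinuous C hφ, LinearMap.mkContinuous_norm_le _ hC _, fun k => ?_⟩
  change ∑' j, b j * (lp.single 1 k 1 : lp (fun _ : α => ℝ) 1) j = b k
  rw [tsum_eq_single k fun j hj => by simp [hj]]
  simp

theorem exists_strongDual_apply_single_eq {α X : Type*} [DecidableEq α] [NormedAddCommGroup X]
    [NormedSpace ℝ X] (T : lp (fun _ : α => ℝ) 1 →L[ℝ] X) {c : ℝ} (hc : 0 < c)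
    (hT : ∀ v, c * ‖v‖ ≤ ‖T v‖) {b : α → ℝ} (hb : ∀ k, ‖b k‖ ≤ 1) :
    ∃ g : StrongDual ℝ X, ‖g‖ ≤ 1 / c ∧ ∀ k, g (T (lp.single 1 k 1)) = b k := by
  obtain ⟨φ, hφ, hφb⟩ := exists_lp_one_dual_apply_single zero_le_one hb
  obtain ⟨g, rfl, hg⟩ := exists_strongDual_comp_eq T hc hT φ
  exact ⟨g, hg.trans (by gcongr), hφb⟩

theorem isCompact_closedBall_inter_forall_apply_mem {𝕜 ι X : Type*} [RCLike 𝕜]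
    [NormedAddCommGroup X] [NormedSpace 𝕜 X] (y : ι → X) (r : ℝ) {s : Set 𝕜} (hs : IsClosed s) :
    IsCompact (WeakDual.toStrongDual ⁻¹' closedBall (0 : StrongDual 𝕜 X) r ∩
      {g : WeakDual 𝕜 X | ∀ i, g (y i) ∈ s}) := by
  refine (WeakDual.isCompact_closedBall _ _).of_isClosed_subset
    ((WeakDual.isClosed_closedBall _ _).inter ?_) inter_subset_left
  simp only [ofPred_forall]
  exact isClosed_iInter fun i => hs.preimage (WeakDual.eval_continuous _)

theorem stmt8_general {X : Type*} [NormedAddCommGroup X] [NormedSpace ℝ X]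
    (hdense : ∀ F : (X →L[ℝ] ℝ) →L[ℝ] ℝ, ∃ x : ℕ → X,
      ∀ g : X →L[ℝ] ℝ, Tendsto (fun n => g (x n)) atTop (𝓝 (F g))) :
    ¬ ∃ T : (lp (fun _ : ℕ => ℝ) 1) →L[ℝ] X, ∃ c : ℝ, 0 < c ∧ ∀ v, c * ‖v‖ ≤ ‖T v‖ := by
  rintro ⟨T, c, hc, hT⟩
  let y : ℕ → X := fun k => T (lp.single 1 k 1)
  obtain ⟨Φ, hΦ⟩ := exists_forall_apply_tendsto_ultrafilter (𝕜 := ℝ) (hyperfilter ℕ)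
    (y := y) (M := ‖T‖) fun k => by simpa [y] using T.le_opNorm (lp.single 1 k 1)
  obtain ⟨x, hx⟩ := hdense Φ
  let K : Set (WeakDual ℝ X) := WeakDual.toStrongDual ⁻¹' closedBall 0 (1 / c) ∩
    {g | ∀ k, g (y k) ∈ ({0, 1} : Set ℝ)}
  have : CompactSpace K := isCompact_iff_compactSpace.mp
    (isCompact_closedBall_inter_forall_apply_mem y _ (toFinite _).isClosed)
  have hrange : range (fun (g : K) k => (g : WeakDual ℝ X) (y k)) = univ.pi fun _ => {0, 1} := by
    refine Subset.antisymm (range_subset_iff.mpr fun g k _ => g.2.2 k) fun b hb => ?_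
    obtain ⟨g, hg, hgb⟩ := exists_strongDual_apply_single_eq T hc hT (b := b) fun k => by
      rcases hb k (mem_univ k) with h | h <;> simp_all
    exact ⟨⟨StrongDual.toWeakDual g, mem_closedBall_zero_iff.mpr hg,
      fun k => hgb k ▸ hb k (mem_univ k)⟩, funext hgb⟩
  exact not_forall_tendsto_of_range_eq_pi
    (continuous_pi fun k => (WeakDual.eval_continuous _).comp continuous_subtype_val) hrange
    hyperfilter_le_cofinite (f := fun g => Φ (WeakDual.toStrongDual g)) (fun g => hΦ _)
    (fun n => (WeakDual.eval_continuous (x n)).comp continuous_subtype_val) fun g => hx _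

/-- If every element of `X**` is the weak*-limit of a sequence from `X`, then `X`
contains no isomorphic copy of `ℓ₁`. -/
theorem stmt8 {X : Type*} [NormedAddCommGroup X] [NormedSpace ℝ X] [CompleteSpace X]
    (hdense : ∀ F : (X →L[ℝ] ℝ) →L[ℝ] ℝ, ∃ x : ℕ → X,
      ∀ g : X →L[ℝ] ℝ, Tendsto (fun n => g (x n)) atTop (𝓝 (F g))) :
    ¬ ∃ T : (lp (fun _ : ℕ => ℝ) 1) →L[ℝ] X, ∃ c : ℝ, 0 < c ∧ ∀ v, c * ‖v‖ ≤ ‖T v‖ :=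
  stmt8_general hdense
end

section
/- Let $X$ be a Banach space whose dual unit ball $B_{X^*}$ is convex block weak*-compact (every sequence in $B_{X^*}$ has a weak*-convergent convex block subsequence). Let $D\subseteq X^*$ be a bounded set and $x\in X$. Then there exists $x_0^*$ in the set $S_1(\mathrm{co}(D))$ of weak*-limits of sequences from the convex hull of $D$ such that $x_0^*(x)=\sup\{x^*(x) : x^*\in \overline{D}^{w^*}\}$. -/
/-!
Choose `φₙ ∈ D` with `φₙ x` increasing to `sup {φ x | φ ∈ D}`, which is also the supremum over the
weak*-closure of `D`. A weak*-convergent convex block subsequence of `(φₙ)` lies in `co D`, and its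
`k`-th term evaluated at `x` averages values `φₘ x` with `m ≥ k`, so it also tends to that supremum.
-/

open Filter Topology

structure IsConvexBlockWeights (I : ℕ → Finset ℕ) (a : ℕ → ℝ) : Prop where
  nonempty : ∀ k, (I k).Nonempty
  lt_of_mem_succ : ∀ k, ∀ m ∈ I k, ∀ m' ∈ I (k + 1), m < m'
  nonneg : ∀ n, 0 ≤ a n
  sum_eq_one : ∀ k, ∑ n ∈ I k, a n = 1

namespace IsConvexBlockWeights

variable {I : ℕ → Finset ℕ} {a : ℕ → ℝ}

theorem le_of_mem (h : IsConvexBlockWeights I a) : ∀ k, ∀ m ∈ I k, k ≤ m := by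
  intro k
  induction k with
  | zero => exact fun m _ => m.zero_le
  | succ k ih =>
    intro m hm
    obtain ⟨m₀, hm₀⟩ := h.nonempty k
    exact (ih m₀ hm₀).trans_lt (h.lt_of_mem_succ k m₀ hm₀ m hm)

theorem sum_smul_mem_convexHull {E : Type*} [AddCommGroup E] [Module ℝ E]
    (h : IsConvexBlockWeights I a) {s : Set E} {f : ℕ → E} (hf : ∀ n, f n ∈ s) (k : ℕ) :
    ∑ n ∈ I k, a n • f n ∈ convexHull ℝ s :=
  (convex_convexHull ℝ s).sum_mem (fun n _ => h.nonneg n) (h.sum_eq_one k)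
    fun n _ => subset_convexHull ℝ s (hf n)

theorem sum_mul_const (h : IsConvexBlockWeights I a) (k : ℕ) (r : ℝ) :
    ∑ n ∈ I k, a n * r = r := by
  rw [← Finset.sum_mul, h.sum_eq_one k, one_mul]

theorem tendsto_sum_mul_of_monotone (h : IsConvexBlockWeights I a) {c : ℕ → ℝ} {L : ℝ}
    (hc : Monotone c) (hlim : Tendsto c atTop (𝓝 L)) :
    Tendsto (fun k => ∑ n ∈ I k, a n * c n) atTop (𝓝 L) := by
  have lower (k : ℕ) : c k ≤ ∑ n ∈ I k, a n * c n := by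
    calc c k = ∑ n ∈ I k, a n * c k := (h.sum_mul_const k _).symm
      _ ≤ ∑ n ∈ I k, a n * c n := Finset.sum_le_sum fun n hn =>
          mul_le_mul_of_nonneg_left (hc (h.le_of_mem k n hn)) (h.nonneg n)
  have upper (k : ℕ) : ∑ n ∈ I k, a n * c n ≤ L := by
    calc ∑ n ∈ I k, a n * c n ≤ ∑ n ∈ I k, a n * L := Finset.sum_le_sum fun n _ =>
          mul_le_mul_of_nonneg_left (hc.ge_of_tendsto hlim n) (h.nonneg n)
      _ = L := h.sum_mul_const k L
  exact tendsto_of_tendsto_of_tendsto_of_le_of_le hlim tendsto_const_nhds lower upper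

end IsConvexBlockWeights

theorem csSup_image_closure_eq {α β : Type*} [TopologicalSpace α] [ConditionallyCompleteLattice β]
    [TopologicalSpace β] [ClosedIicTopology β] {f : α → β} (hf : Continuous f) {s : Set α}
    (hs : s.Nonempty) (hb : BddAbove (f '' s)) : sSup (f '' closure s) = sSup (f '' s) :=
  ((isLUB_iff_of_subset_of_subset_closure (Set.image_mono subset_closure)
    (image_closure_subset_closure_image hf)).1 (isLUB_csSup (hs.image f) hb)).csSup_eq
    (hs.closure.image f)

section WeakDual

variable {X : Type*} [NormedAddCommGroup X] [NormedSpace ℝ X]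

theorem WeakDual.sum_smul_apply (t : Finset ℕ) (a : ℕ → ℝ) (f : ℕ → WeakDual ℝ X) (x : X) :
    (∑ n ∈ t, a n • f n) x = ∑ n ∈ t, a n * f n x := by
  rw [← WeakDual.toStrongDual_apply, map_sum]
  simp [WeakDual.toStrongDual_apply]

/-- Convex block compactness of the dual unit ball passes to every ball, by rescaling. -/
theorem exists_isConvexBlockWeights_tendsto_of_bounded
    (hblock : ∀ f : ℕ → WeakDual ℝ X, (∀ n, ∀ y : X, |f n y| ≤ ‖y‖) →
      ∃ (I : ℕ → Finset ℕ) (a : ℕ → ℝ) (g : WeakDual ℝ X),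
        (∀ k, (I k).Nonempty) ∧
        (∀ k, ∀ m ∈ I k, ∀ m' ∈ I (k + 1), m < m') ∧
        (∀ n, 0 ≤ a n) ∧ (∀ k, ∑ n ∈ I k, a n = 1) ∧
        Tendsto (fun k => ∑ n ∈ I k, a n • f n) atTop (𝓝 g))
    {f : ℕ → WeakDual ℝ X} {M : ℝ} (hf : ∀ n, ∀ y : X, |f n y| ≤ M * ‖y‖) :
    ∃ (I : ℕ → Finset ℕ) (a : ℕ → ℝ) (g : WeakDual ℝ X), IsConvexBlockWeights I a ∧
      Tendsto (fun k => ∑ n ∈ I k, a n • f n) atTop (𝓝 g) := by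
  set r := max M 1
  have hr : 0 < r := zero_lt_one.trans_le (le_max_right M 1)
  have hscaled (n : ℕ) (y : X) : |(r⁻¹ • f n) y| ≤ ‖y‖ := by
    calc |(r⁻¹ • f n) y| = r⁻¹ * |f n y| := by
          rw [show (r⁻¹ • f n) y = r⁻¹ * f n y from rfl, abs_mul, abs_of_pos (inv_pos.2 hr)]
      _ ≤ r⁻¹ * (r * ‖y‖) := by
          gcongr
          exact (hf n y).trans (by gcongr; exact le_max_left M 1)
      _ = ‖y‖ := by field_simp
  obtain ⟨I, a, g, hne, hlt, ha, hsum, hg⟩ := hblock _ hscaled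
  refine ⟨I, a, r • g, ⟨hne, hlt, ha, hsum⟩, (hg.const_smul r).congr fun k => ?_⟩
  simp only [Finset.smul_sum, smul_smul, mul_comm r, mul_assoc, inv_mul_cancel₀ hr.ne', mul_one]

end WeakDual

theorem stmt9_general {X : Type*} [NormedAddCommGroup X] [NormedSpace ℝ X]
    (hblock : ∀ f : ℕ → WeakDual ℝ X, (∀ n, ∀ y : X, |f n y| ≤ ‖y‖) →
      ∃ (I : ℕ → Finset ℕ) (a : ℕ → ℝ) (g : WeakDual ℝ X),
        (∀ k, (I k).Nonempty) ∧
        (∀ k, ∀ m ∈ I k, ∀ m' ∈ I (k + 1), m < m') ∧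
        (∀ n, 0 ≤ a n) ∧ (∀ k, ∑ n ∈ I k, a n = 1) ∧
        Tendsto (fun k => ∑ n ∈ I k, a n • f n) atTop (𝓝 g))
    (D : Set (WeakDual ℝ X)) (hDne : D.Nonempty)
    (M : ℝ) (hD : ∀ φ ∈ D, ∀ y : X, |φ y| ≤ M * ‖y‖) (x : X) :
    ∃ x₀ : WeakDual ℝ X,
      (∃ u : ℕ → WeakDual ℝ X, (∀ n, u n ∈ convexHull ℝ D) ∧
        Tendsto u atTop (𝓝 x₀)) ∧
      x₀ x = sSup ((fun φ : WeakDual ℝ X => φ x) '' closure D) := by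
  have hbdd : BddAbove ((fun φ : WeakDual ℝ X => φ x) '' D) :=
    ⟨M * ‖x‖, by rintro _ ⟨φ, hφ, rfl⟩; exact (le_abs_self _).trans (hD φ hφ x)⟩
  rw [csSup_image_closure_eq (WeakDual.eval_continuous x) hDne hbdd]
  obtain ⟨c, hc_mono, hc_lim, hcD⟩ := exists_seq_tendsto_sSup (hDne.image _) hbdd
  choose f hfD hfx using hcD
  obtain ⟨I, a, g, hIa, hg⟩ :=
    exists_isConvexBlockWeights_tendsto_of_bounded hblock fun n => hD _ (hfD n)
  refine ⟨g, ⟨_, hIa.sum_smul_mem_convexHull hfD, hg⟩, tendsto_nhds_unique ?_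
    (hIa.tendsto_sum_mul_of_monotone hc_mono hc_lim)⟩
  simpa only [Function.comp_def, WeakDual.sum_smul_apply, hfx] using
    ((WeakDual.eval_continuous x).tendsto g).comp hg

/-- Lemma 5.6: if the dual unit ball of `X` is convex block weak*-compact, then for
every nonempty bounded set `D` in the (weak*) dual and every `x ∈ X`, there is a
weak*-limit `x₀` of a sequence from the convex hull of `D` attaining
`sup {x*(x) : x* ∈ weak*-closure of D}`. -/
theorem stmt9 {X : Type*} [NormedAddCommGroup X] [NormedSpace ℝ X] [CompleteSpace X]
    (hblock : ∀ f : ℕ → WeakDual ℝ X, (∀ n, ∀ y : X, |f n y| ≤ ‖y‖) →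
      ∃ (I : ℕ → Finset ℕ) (a : ℕ → ℝ) (g : WeakDual ℝ X),
        (∀ k, (I k).Nonempty) ∧
        (∀ k, ∀ m ∈ I k, ∀ m' ∈ I (k + 1), m < m') ∧
        (∀ n, 0 ≤ a n) ∧ (∀ k, ∑ n ∈ I k, a n = 1) ∧
        Tendsto (fun k => ∑ n ∈ I k, a n • f n) atTop (𝓝 g))
    (D : Set (WeakDual ℝ X)) (hDne : D.Nonempty)
    (M : ℝ) (hD : ∀ φ ∈ D, ∀ y : X, |φ y| ≤ M * ‖y‖) (x : X) :
    ∃ x₀ : WeakDual ℝ X,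
      (∃ u : ℕ → WeakDual ℝ X, (∀ n, u n ∈ convexHull ℝ D) ∧
        Tendsto u atTop (𝓝 x₀)) ∧
      x₀ x = sSup ((fun φ : WeakDual ℝ X => φ x) '' closure D) :=
  stmt9_general hblock D hDne M hD x
end

section
/- Let $X$ be a Banach space which is weak*-sequentially dense in $X^{**}$. Then the topology $\gamma$ on $X^*$ of uniform convergence on bounded countable subsets of $X$ is stronger than the weak topology of $X^*$; consequently, for any set $B\subseteq X^*$, the $\gamma$-closure of $\mathrm{co}(B)$ is contained in the norm-closure of $\mathrm{co}(B)$. -/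
open Filter Topology

/-- If `X` is weak*-sequentially dense in `X**`, then the topology `γ` of uniform
convergence on bounded countable subsets of `X` is stronger than the weak topology of
`X*` (here expressed for sequences against an arbitrary `F ∈ X**`); consequently, any
functional in the `γ`-closure of `co(B)` lies in the norm-closure of `co(B)`. -/
theorem stmt11 {X : Type*} [NormedAddCommGroup X] [NormedSpace ℝ X] [CompleteSpace X]
    (hdense : ∀ F : (X →L[ℝ] ℝ) →L[ℝ] ℝ, ∃ x : ℕ → X,
      ∀ g : X →L[ℝ] ℝ, Tendsto (fun n => g (x n)) atTop (𝓝 (F g))) :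
    (∀ (F : (X →L[ℝ] ℝ) →L[ℝ] ℝ) (u : ℕ → X →L[ℝ] ℝ) (φ : X →L[ℝ] ℝ),
      (∀ A : Set X, A.Countable → Bornology.IsBounded A → ∀ ε > 0,
        ∀ᶠ n in atTop, ∀ x ∈ A, |u n x - φ x| ≤ ε) →
      Tendsto (fun n => F (u n)) atTop (𝓝 (F φ))) ∧
    (∀ (B : Set (X →L[ℝ] ℝ)) (φ : X →L[ℝ] ℝ),
      (∀ A : Set X, A.Countable → Bornology.IsBounded A → ∀ ε > 0,
        ∃ ψ ∈ convexHull ℝ B, ∀ x ∈ A, |φ x - ψ x| ≤ ε) →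
      φ ∈ closure (convexHull ℝ B)) := by
  classical
  have key : ∀ F : (X →L[ℝ] ℝ) →L[ℝ] ℝ, ∃ A : Set X, A.Countable ∧ Bornology.IsBounded A ∧
      ∀ (g : X →L[ℝ] ℝ) (ε : ℝ), (∀ x ∈ A, |g x| ≤ ε) → |F g| ≤ ε := by
    intro F
    obtain ⟨x, hx⟩ := hdense F
    refine ⟨Set.range x, Set.countable_range x, ?_, ?_⟩
    · -- boundedness via Banach–Steinhaus
      have hbs : ∃ C', ∀ n, ‖NormedSpace.inclusionInDoubleDual ℝ X (x n)‖ ≤ C' := by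
        apply banach_steinhaus
        intro g
        have hb : BddAbove (Set.range fun n => |g (x n)|) := ((hx g).abs).bddAbove_range
        obtain ⟨C, hC⟩ := hb
        refine ⟨C, fun n => ?_⟩
        simpa [NormedSpace.dual_def, Real.norm_eq_abs] using hC ⟨n, rfl⟩
      obtain ⟨C', hC'⟩ := hbs
      rw [isBounded_iff_forall_norm_le]
      refine ⟨C', ?_⟩
      rintro _ ⟨n, rfl⟩
      have : ‖NormedSpace.inclusionInDoubleDual ℝ X (x n)‖ = ‖x n‖ :=
        (NormedSpace.inclusionInDoubleDualLi ℝ).norm_map (x n)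
      linarith [hC' n]
    · intro g ε hle
      have habs : Tendsto (fun n => |g (x n)|) atTop (𝓝 |F g|) := (hx g).abs
      exact le_of_tendsto' habs fun n => hle _ ⟨n, rfl⟩
  refine ⟨?_, ?_⟩
  · intro F u φ h
    obtain ⟨A, hAc, hAb, hA⟩ := key F
    rw [Metric.tendsto_nhds]
    intro ε hε
    filter_upwards [h A hAc hAb (ε / 2) (by positivity)] with n hn
    have hb : |F (u n - φ)| ≤ ε / 2 := by
      refine hA (u n - φ) (ε / 2) fun x hx => ?_
      simpa using hn x hx
    rw [Real.dist_eq]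
    have : F (u n) - F φ = F (u n - φ) := by rw [map_sub]
    rw [this]
    linarith
  · intro B φ h
    by_contra hφ
    obtain ⟨f, c, hfs, hfφ⟩ := geometric_hahn_banach_closed_point
      ((convex_convexHull ℝ B).closure) isClosed_closure hφ
    obtain ⟨A, hAc, hAb, hA⟩ := key f
    have hεpos : (0:ℝ) < (f φ - c) / 2 := by linarith
    obtain ⟨ψ, hψB, hψ⟩ := h A hAc hAb ((f φ - c) / 2) hεpos
    have h1 : |f (φ - ψ)| ≤ (f φ - c) / 2 := by
      refine hA (φ - ψ) _ fun x hx => ?_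
      simpa using hψ x hx
    have h2 : f ψ < c := hfs ψ (subset_closure hψB)
    have h3 := (abs_le.1 h1).2
    rw [map_sub] at h3
    linarith
end

section
/- For any function $f:\mathbb{N}\to\mathbb{N}$ define $M_f(i,j)=1$ if $j<f(i)$ and $M_f(i,j)=1/i$ if $j\ge f(i)$. Let $\Gamma\subseteq\mathbb{N}^{\mathbb{N}}$ be cofinal for eventual domination $\le^*$. In the dual $\ell_\infty(\Gamma)$ of $\ell_1(\Gamma)$, let $x^*_{i,j}\in[0,1]^\Gamma$ be defined by $x^*_{i,j}(f)=M_f(i,j)$, and let $C$ be the convex hull of $\{x^*_{i,j} : (i,j)\in\mathbb{N}\times\mathbb{N}\}$. Then no sequence in $C$ is weak*-null, i.e., for every sequence $(y_n^*)$ in $C$ there exists $f\in\Gamma$ such that $y_n^*(f)$ does not converge to $0$. -/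
/-!
Suppose every `y n f` with `f ∈ Γ` tends to `0` and fix `f₀ ∈ Γ`. Each generator satisfies
`1 ≤ M_f(i,j) + K M_{f₀}(i,j)` whenever `i < K` or `j < f(i)`, and this half-space condition
passes to convex hulls. Pick `n_k ≥ k` with `k y_{n_k}(f₀) < 1/2`; each `y_{n_k}` uses finitely
many generators, so a single `f ∈ Γ` eventually exceeds, in every row `i ≥ k`, all columns used by
`y_{n_k}`. Then `y_{n_k}(f) > 1/2` for all large `k`, contradicting `y n f → 0`.
-/

open Filter Topology Set

theorem exists_finset_mem_convexHull_image {R E ι : Type*} [Field R] [LinearOrder R]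
    [IsStrictOrderedRing R] [AddCommGroup E] [Module R E] {v : ι → E} {y : E}
    (hy : y ∈ convexHull R (range v)) : ∃ S : Finset ι, y ∈ convexHull R (v '' S) := by
  classical
  rw [convexHull_eq_union_convexHull_finite_subsets] at hy
  obtain ⟨t, ht, hyt⟩ := mem_iUnion₂.mp hy
  obtain ⟨S, -, rfl⟩ := Finset.subset_set_image_iff.mp (image_univ ▸ ht)
  exact ⟨S, by rwa [← Finset.coe_image]⟩

theorem exists_snd_lt_of_le_fst (T : ℕ → Finset (ℕ × ℕ)) :
    ∃ g : ℕ → ℕ, ∀ k, ∀ p ∈ T k, k ≤ p.1 → p.2 < g p.1 := by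
  refine ⟨fun i => (Finset.range (i + 1)).sup (fun k => (T k).sup Prod.snd) + 1,
    fun k p hp hk => Nat.lt_succ_of_le ?_⟩
  exact (Finset.le_sup (f := Prod.snd) hp).trans
    (Finset.le_sup (f := fun k => (T k).sup Prod.snd) (Finset.mem_range_succ_iff.mpr hk))

namespace CofinalHull

noncomputable def M (f : ℕ → ℕ) (i j : ℕ) : ℝ := if j < f i then 1 else 1 / ((i : ℝ) + 1)

theorem M_nonneg (f : ℕ → ℕ) (i j : ℕ) : 0 ≤ M f i j := by
  unfold M; split_ifs <;> positivity

theorem one_div_succ_le_M (f : ℕ → ℕ) (i j : ℕ) : 1 / ((i : ℝ) + 1) ≤ M f i j := by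
  unfold M; split_ifs
  · exact div_le_one_of_le₀ (by linarith [(Nat.cast_nonneg i : (0 : ℝ) ≤ i)]) (by positivity)
  · exact le_rfl

theorem one_le_M_add_mul_M {f f₀ : ℕ → ℕ} {K i j : ℕ} (h : i < K ∨ j < f i) :
    1 ≤ M f i j + K * M f₀ i j := by
  rcases h with hiK | hj
  · have hK : (i : ℝ) + 1 ≤ K := by exact_mod_cast hiK
    calc (1 : ℝ) ≤ K * (1 / ((i : ℝ) + 1)) := by
          rw [mul_one_div, le_div_iff₀ (by positivity)]; linarith
      _ ≤ K * M f₀ i j := by gcongr; exact one_div_succ_le_M f₀ i j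
      _ ≤ M f i j + K * M f₀ i j := le_add_of_nonneg_left (M_nonneg f i j)
  · rw [M, if_pos hj]
    exact le_add_of_nonneg_right (mul_nonneg (Nat.cast_nonneg K) (M_nonneg f₀ i j))

theorem one_le_add_mul_of_mem_convexHull {f f₀ : ℕ → ℕ} {K : ℕ} {S : Set (ℕ × ℕ)}
    (hS : ∀ p ∈ S, p.1 < K ∨ p.2 < f p.1) {y : (ℕ → ℕ) → ℝ}
    (hy : y ∈ convexHull ℝ ((fun p g => M g p.1 p.2) '' S)) : 1 ≤ y f + K * y f₀ := by
  have hlin : IsLinearMap ℝ fun w : (ℕ → ℕ) → ℝ => w f + K * w f₀ :=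
    (LinearMap.proj f + (K : ℝ) • LinearMap.proj f₀ : ((ℕ → ℕ) → ℝ) →ₗ[ℝ] ℝ).isLinear
  refine convexHull_min ?_ (convex_halfSpace_ge hlin 1) hy
  rintro _ ⟨p, hp, rfl⟩
  exact one_le_M_add_mul_M (hS p hp)

end CofinalHull

open CofinalHull in
/-- Core of Example 5.3: with `M_f(i,j) = 1` if `j < f(i)` and `1/(i+1)` otherwise
(indices starting at 0), `Γ` cofinal in `(ℕ → ℕ, ≤*)`, `x i j ∈ [0,1]^Γ` the
corresponding elements of `ℓ∞(Γ) = ℓ₁(Γ)*`, and `C` their convex hull, no sequence in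
`C` is weak*-null: every sequence `(y n)` in `C` admits `f ∈ Γ` with
`y n (f) ↛ 0`. -/
theorem stmt13 (Γ : Set (ℕ → ℕ))
    (hcof : ∀ g : ℕ → ℕ, ∃ f ∈ Γ, ∀ᶠ i in atTop, g i ≤ f i)
    (x : ℕ → ℕ → (ℕ → ℕ) → ℝ)
    (hx : ∀ i j f, x i j f = if j < f i then 1 else 1 / ((i : ℝ) + 1))
    (y : ℕ → (ℕ → ℕ) → ℝ)
    (hy : ∀ n, y n ∈ convexHull ℝ {g : (ℕ → ℕ) → ℝ | ∃ i j, g = x i j}) :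
    ∃ f ∈ Γ, ¬ Tendsto (fun n => y n f) atTop (𝓝 0) := by
  obtain rfl : x = fun i j f => M f i j := by funext i j f; exact hx i j f
  have hgen : {g : (ℕ → ℕ) → ℝ | ∃ i j, g = fun f => M f i j} =
      range (fun p : ℕ × ℕ => fun f => M f p.1 p.2) := by
    ext; simp [eq_comm]
  choose S hS using fun n => exists_finset_mem_convexHull_image (hgen ▸ hy n)
  by_contra! hnull
  obtain ⟨f₀, hf₀, -⟩ := hcof 0
  have hsmall (k : ℕ) : ∃ n, k ≤ n ∧ k * y n f₀ < 1 / 2 :=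
    ((eventually_ge_atTop k).and
      (((hnull f₀ hf₀).const_mul (k : ℝ)).eventually (gt_mem_nhds (by norm_num)))).exists
  choose φ hφ_ge hφ_small using hsmall
  obtain ⟨g, hg⟩ := exists_snd_lt_of_le_fst (fun k => S (φ k))
  obtain ⟨f, hf, hgf⟩ := hcof g
  obtain ⟨I, hI⟩ := eventually_atTop.mp hgf
  have hlarge (k : ℕ) (hk : I ≤ k) : 1 / 2 < y (φ k) f := by
    have hrows : ∀ p ∈ (S (φ k) : Set (ℕ × ℕ)), p.1 < k ∨ p.2 < f p.1 := fun p hp =>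
      or_iff_not_imp_left.mpr fun h =>
        (hg k p hp (not_lt.mp h)).trans_le (hI _ (hk.trans (not_lt.mp h)))
    linarith [one_le_add_mul_of_mem_convexHull (f₀ := f₀) hrows (hS (φ k)), hφ_small k]
  have hlim := (hnull f hf).comp (tendsto_atTop_mono hφ_ge tendsto_id)
  obtain ⟨k, hk, hk_small⟩ := ((eventually_ge_atTop I).and
    (hlim.eventually (gt_mem_nhds (by norm_num : (0 : ℝ) < 1 / 2)))).exists
  exact (hlarge k hk).not_gt hk_small
end

section
/- With notation as in the $\ell_1(\mathfrak{d})$ example: for each fixed $i\in\mathbb{N}$, the sequence $(x^*_{i,j})_{j\in\mathbb{N}}$ converges pointwise on $\Gamma$ (i.e., weak* in $\ell_\infty(\Gamma)=\ell_1(\Gamma)^*$) to the constant function $\frac{1}{i}\chi_\Gamma$; consequently $\frac{1}{i}\chi_\Gamma\in S_1(C)$ for all $i$ and hence $0$ lies in the norm closure of $S_1(C)$. -/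
open Filter Topology

/-- The set of weak*-limits (pointwise on `Γ`) of sequences from `C`. -/
def S1C (Γ : Set (ℕ → ℕ)) (C : Set ((ℕ → ℕ) → ℝ)) : Set ((ℕ → ℕ) → ℝ) :=
  {φ | ∃ u : ℕ → (ℕ → ℕ) → ℝ, (∀ n, u n ∈ C) ∧
    ∀ f ∈ Γ, Tendsto (fun n => u n f) atTop (𝓝 (φ f))}

/-- In the `ℓ₁(𝔡)` example: for fixed `i`, the sequence `(x i j)_j` converges
pointwise on `Γ` to the constant function `1/(i+1)` (indices from 0); hence each such
constant function belongs to `S₁(C)` and `0` lies in the sup-norm closure of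
`S₁(C)`. -/
theorem stmt14 (Γ : Set (ℕ → ℕ))
    (x : ℕ → ℕ → (ℕ → ℕ) → ℝ)
    (hx : ∀ i j f, x i j f = if j < f i then 1 else 1 / ((i : ℝ) + 1)) :
    (∀ i : ℕ, ∀ f ∈ Γ, Tendsto (fun j => x i j f) atTop (𝓝 (1 / ((i : ℝ) + 1)))) ∧
    (∀ i : ℕ, (fun _ : ℕ → ℕ => (1 / ((i : ℝ) + 1))) ∈
      S1C Γ (convexHull ℝ {g : (ℕ → ℕ) → ℝ | ∃ i j, g = x i j})) ∧
    (∀ ε > (0 : ℝ), ∃ φ ∈ S1C Γ (convexHull ℝ {g : (ℕ → ℕ) → ℝ | ∃ i j, g = x i j}),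
      ∀ f ∈ Γ, |φ f| ≤ ε) := by
  have h1 : ∀ i : ℕ, ∀ f ∈ Γ, Tendsto (fun j => x i j f) atTop (𝓝 (1 / ((i : ℝ) + 1))) := by
    intro i f _
    apply tendsto_atTop_of_eventually_const (i₀ := f i)
    intro j hj
    rw [hx]
    simp [Nat.not_lt.mpr hj]
  have h2 : ∀ i : ℕ, (fun _ : ℕ → ℕ => (1 / ((i : ℝ) + 1))) ∈
      S1C Γ (convexHull ℝ {g : (ℕ → ℕ) → ℝ | ∃ i j, g = x i j}) := by
    intro i
    refine ⟨fun j => x i j, fun j => subset_convexHull ℝ _ ⟨i, j, rfl⟩, h1 i⟩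
  refine ⟨h1, h2, ?_⟩
  intro ε hε
  obtain ⟨i, hi⟩ := exists_nat_gt (1 / ε)
  refine ⟨_, h2 i, fun f _ => ?_⟩
  have hpos : (0:ℝ) < (i:ℝ) + 1 := by positivity
  rw [abs_of_pos (by positivity)]
  rw [div_le_iff₀ hpos]
  have : 1 / ε < (i:ℝ) + 1 := lt_trans hi (by linarith)
  rw [div_lt_iff₀ hε] at this
  linarith
end

section
/- Let $\mathcal{F}_-$ be an almost disjoint family such that for every convex null matrix $(\lambda_{i,j})$ there exists $N\in\mathcal{F}_-$ with $\limsup_{i\to\infty}\sum_{j\in N}\lambda_{i,j}>0$. Then no sequence in $C:=\mathrm{co}(\{e_n^* : n\in\mathbb{N}\})\subseteq JL_2(\mathcal{F}_-)^*$ is weak*-null; since $0\in\overline{C}^{w^*}$, the space $JL_2(\mathcal{F}_-)$ fails property $(\mathcal{E})$. -/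
open Filter Topology
open scoped Classical

/-!
A functional in the convex hull of the `e*_n` restricts to a probability vector on the `e_j`, and
its value at `χ_N` is the mass of that vector on `N`. A weak*-null sequence in the hull would thus
be a convex null matrix whose mass on every `N ∈ F` tends to `0`, which the hypothesis forbids.

Because `F` is infinite and almost disjoint, a finite set together with finitely many members of
`F` never covers a further member, so the sets containing cofinitely many points off finitely many
members of `F` form a proper filter. Along it `e*_n(x) → 0` on the generators `e_j`, `χ_N`, hence
on all of `X` by density and equicontinuity. So `0` lies in the weak*-closure of the hull without
being the weak*-limit of a sequence from it.
-/

section ConvexHull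

variable {X : Type*} [AddCommGroup X] [TopologicalSpace X] [Module ℝ X]
  {ι : Type*} {f : ι → X →L[ℝ] ℝ} {φ : X →L[ℝ] ℝ}

theorem apply_nonneg_of_mem_convexHull {x : X} (h : ∀ i, 0 ≤ f i x)
    (hφ : φ ∈ convexHull ℝ (Set.range f)) : 0 ≤ φ x := by
  refine convexHull_min (t := {ψ | 0 ≤ ψ x}) (Set.range_subset_iff.2 h)
    (fun ψ hψ χ hχ a b ha hb _ => ?_) hφ
  have : 0 ≤ a * ψ x + b * χ x := add_nonneg (mul_nonneg ha hψ) (mul_nonneg hb hχ)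
  simpa using this

theorem hasSum_apply_of_mem_convexHull {v : ℕ → X} {c : ℝ}
    (h : ∀ i, HasSum (fun j => f i (v j)) c) (hφ : φ ∈ convexHull ℝ (Set.range f)) :
    HasSum (fun j => φ (v j)) c := by
  refine convexHull_min (t := {ψ | HasSum (fun j => ψ (v j)) c}) (Set.range_subset_iff.2 h)
    (fun ψ hψ χ hχ a b _ _ hab => ?_) hφ
  have := (hψ.mul_left a).add (hχ.mul_left b)
  rw [← add_mul, hab, one_mul] at this
  simpa using this

theorem hasSum_apply_apply_of_mem_convexHull {v : ℕ → X} {w : X}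
    (h : ∀ i, HasSum (fun j => f i (v j)) (f i w)) (hφ : φ ∈ convexHull ℝ (Set.range f)) :
    HasSum (fun j => φ (v j)) (φ w) := by
  refine convexHull_min (t := {ψ | HasSum (fun j => ψ (v j)) (ψ w)})
    (Set.range_subset_iff.2 h) (fun ψ hψ χ hχ a b _ _ _ => ?_) hφ
  simpa using (hψ.mul_left a).add (hχ.mul_left b)

end ConvexHull

def IsConvexNullMatrix (l : ℕ → ℕ → ℝ) : Prop :=
  (∀ i j, 0 ≤ l i j) ∧ (∀ i, HasSum (l i) 1) ∧ ∀ j, Tendsto (fun i => l i j) atTop (𝓝 0)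

section Biorthogonal

variable {X : Type*} [AddCommGroup X] [TopologicalSpace X] [Module ℝ X]
  {e : ℕ → X} {estar : ℕ → X →L[ℝ] ℝ}

theorem isConvexNullMatrix_apply (h1 : ∀ n j, estar n (e j) = if n = j then 1 else 0)
    {y : ℕ → X →L[ℝ] ℝ} (hy : ∀ i, y i ∈ convexHull ℝ (Set.range estar))
    (hnull : ∀ x, Tendsto (fun i => y i x) atTop (𝓝 0)) :
    IsConvexNullMatrix fun i j => y i (e j) := by
  refine ⟨fun i j => apply_nonneg_of_mem_convexHull (fun n => ?_) (hy i),
    fun i => hasSum_apply_of_mem_convexHull (fun n => ?_) (hy i), fun j => hnull (e j)⟩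
  · rw [h1]; split_ifs <;> norm_num
  · convert hasSum_single (f := fun j => estar n (e j)) n fun j hj => by simp [h1, Ne.symm hj]
    simp [h1]

theorem hasSum_indicator_apply_of_mem_convexHull {N : Set ℕ} {x : X}
    (h1 : ∀ n j, estar n (e j) = if n = j then 1 else 0)
    (h2 : ∀ n, estar n x = if n ∈ N then 1 else 0)
    {φ : X →L[ℝ] ℝ} (hφ : φ ∈ convexHull ℝ (Set.range estar)) :
    HasSum (fun j => N.indicator (fun j => φ (e j)) j) (φ x) := by
  have hφ' := hasSum_apply_apply_of_mem_convexHull (v := N.indicator e) (w := x)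
    (fun n => ?_) hφ
  · simpa [← Function.comp_def φ, ← Set.indicator_comp_of_zero φ.map_zero] using hφ'
  · convert hasSum_single (f := fun j => estar n (N.indicator e j)) n fun j hj => ?_ using 1
    · by_cases hn : n ∈ N <;> simp [hn, h1, h2]
    · by_cases hj' : j ∈ N <;> simp [hj', h1, Ne.symm hj]

end Biorthogonal

def cofiniteAwayFrom (F : Set (Set ℕ)) : Filter ℕ :=
  cofinite ⊓ ⨅ N : F, 𝓟 (N : Set ℕ)ᶜ

theorem cofiniteAwayFrom_le_cofinite (F : Set (Set ℕ)) : cofiniteAwayFrom F ≤ cofinite :=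
  inf_le_left

theorem eventually_cofiniteAwayFrom_notMem {F : Set (Set ℕ)} {N : Set ℕ} (hN : N ∈ F) :
    ∀ᶠ n in cofiniteAwayFrom F, n ∉ N :=
  inf_le_right (α := Filter ℕ) (mem_iInf_of_mem ⟨N, hN⟩ (mem_principal_self _))

theorem cofiniteAwayFrom_neBot {F : Set (Set ℕ)} (hFinf : F.Infinite)
    (hmem : ∀ N ∈ F, N.Infinite) (hAD : ∀ N ∈ F, ∀ N' ∈ F, N ≠ N' → (N ∩ N').Finite) :
    (cofiniteAwayFrom F).NeBot := by
  refine (hasBasis_cofinite.inf (hasBasis_iInf_principal_finite _)).neBot_iff.2 ?_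
  rintro ⟨J, G⟩ ⟨hJ, hG⟩
  obtain ⟨N₀, hN₀F, hN₀G⟩ := (hFinf.sdiff (hG.image Subtype.val)).nonempty
  have hbad : (N₀ ∩ (J ∪ ⋃ N ∈ G, (N : Set ℕ))).Finite := by
    refine Set.inter_union_distrib_left _ _ _ ▸ (hJ.inter_of_right _).union ?_
    rw [Set.inter_iUnion₂]
    refine hG.biUnion fun N hN => hAD _ hN₀F _ N.2 fun h => hN₀G ⟨N, hN, h.symm⟩
  obtain ⟨n, hnN₀, hn⟩ := ((hmem _ hN₀F).sdiff hbad).nonempty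
  refine ⟨n, fun hnJ => hn ⟨hnN₀, Or.inl hnJ⟩, Set.mem_iInter₂.2 fun N hN hnN => ?_⟩
  exact hn ⟨hnN₀, Or.inr (Set.mem_biUnion hN hnN)⟩

theorem Filter.Tendsto.apply_of_dense_span {ι 𝕜 E G : Type*} [NontriviallyNormedField 𝕜]
    [SeminormedAddCommGroup E] [NormedSpace 𝕜 E] [SeminormedAddCommGroup G] [NormedSpace 𝕜 G]
    {l : Filter ι} {f : ι → E →L[𝕜] G} (hf : ∃ C, ∀ i, ‖f i‖ ≤ C) {s : Set E}
    (hs : Dense (Submodule.span 𝕜 s : Set E)) (h : ∀ x ∈ s, Tendsto (fun i => f i x) l (𝓝 0))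
    (x : E) : Tendsto (fun i => f i x) l (𝓝 0) := by
  have hclosed : IsClosed {x | Tendsto (fun i => f i x) l (𝓝 0)} :=
    Equicontinuous.isClosed_setOfPred_tendsto
      ((NormedSpace.equicontinuous_TFAE f).out 5 1 |>.mp hf) continuous_const
  refine hclosed.closure_subset_iff.2 (fun y hy => ?_) (hs x)
  induction hy using Submodule.span_induction with
  | mem y hy => exact h y hy
  | zero => simpa using tendsto_const_nhds
  | add y z _ _ hy hz => simpa using hy.add hz
  | smul a y _ hy => simpa using hy.const_smul a

theorem StrongDual.toWeakDual_mem_closure_image_of_tendsto {α 𝕜 E : Type*}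
    [NontriviallyNormedField 𝕜] [AddCommMonoid E] [TopologicalSpace E] [Module 𝕜 E]
    {l : Filter α} [l.NeBot] {f : α → StrongDual 𝕜 E} {φ : StrongDual 𝕜 E}
    {C : Set (StrongDual 𝕜 E)}
    (hf : ∀ x, Tendsto (fun a => f a x) l (𝓝 (φ x))) (hC : ∀ᶠ a in l, f a ∈ C) :
    toWeakDual φ ∈ closure (toWeakDual '' C) :=
  mem_closure_of_tendsto (tendsto_iff_forall_eval_tendsto_topDualPairing.2 hf)
    (hC.mono fun _ ha => Set.mem_image_of_mem _ ha)

section NormedBiorthogonal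

variable {X : Type*} [NormedAddCommGroup X] [NormedSpace ℝ X] {F : Set (Set ℕ)}
  {e : ℕ → X} {chi : Set ℕ → X} {estar : ℕ → X →L[ℝ] ℝ}

theorem tendsto_cofiniteAwayFrom_apply (hbdd : ∃ C, ∀ n, ‖estar n‖ ≤ C)
    (h1 : ∀ n j, estar n (e j) = if n = j then 1 else 0)
    (h2 : ∀ n, ∀ N ∈ F, estar n (chi N) = if n ∈ N then 1 else 0)
    (hdense : Dense (Submodule.span ℝ (Set.range e ∪ chi '' F) : Set X)) (x : X) :
    Tendsto (fun n => estar n x) (cofiniteAwayFrom F) (𝓝 0) := by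
  refine Tendsto.apply_of_dense_span hbdd hdense ?_ x
  rintro _ (⟨j, rfl⟩ | ⟨N, hN, rfl⟩)
  · refine tendsto_const_nhds.congr' ?_
    filter_upwards [cofiniteAwayFrom_le_cofinite F (eventually_cofinite_ne j)] with n hn
    simp [h1, hn]
  · refine tendsto_const_nhds.congr' ?_
    filter_upwards [eventually_cofiniteAwayFrom_notMem hN] with n hn
    simp [h2 n N hN, hn]

theorem not_forall_tendsto_zero_of_mem_convexHull
    (hmat : ∀ l, IsConvexNullMatrix l →
      ∃ N ∈ F, 0 < limsup (fun i => ∑' j, N.indicator (l i) j) atTop)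
    (h1 : ∀ n j, estar n (e j) = if n = j then 1 else 0)
    (h2 : ∀ n, ∀ N ∈ F, estar n (chi N) = if n ∈ N then 1 else 0)
    {y : ℕ → X →L[ℝ] ℝ} (hy : ∀ i, y i ∈ convexHull ℝ (Set.range estar)) :
    ¬ ∀ x, Tendsto (fun i => y i x) atTop (𝓝 0) := by
  intro hnull
  obtain ⟨N, hN, hpos⟩ := hmat _ (isConvexNullMatrix_apply h1 hy hnull)
  have hsum : ∀ i, ∑' j, N.indicator (fun j => y i (e j)) j = y i (chi N) := fun i =>
    (hasSum_indicator_apply_of_mem_convexHull h1 (h2 · N hN) (hy i)).tsum_eq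
  simp only [hsum, (hnull (chi N)).limsup_eq] at hpos
  exact hpos.false

end NormedBiorthogonal

theorem stmt17_general {X : Type*} [NormedAddCommGroup X] [NormedSpace ℝ X]
    (F : Set (Set ℕ)) (hFinf : F.Infinite)
    (hmem : ∀ N ∈ F, N.Infinite)
    (hAD : ∀ N ∈ F, ∀ N' ∈ F, N ≠ N' → (N ∩ N').Finite)
    (hmat : ∀ l : ℕ → ℕ → ℝ, (∀ i j, 0 ≤ l i j) → (∀ i, HasSum (l i) 1) →
      (∀ j, Tendsto (fun i => l i j) atTop (𝓝 0)) →
      ∃ N ∈ F, 0 < Filter.limsup (fun i => ∑' j, Set.indicator N (l i) j) atTop)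
    (e : ℕ → X) (chi : Set ℕ → X)
    (estar : ℕ → X →L[ℝ] ℝ)
    (hnorm1 : ∀ n, ‖estar n‖ ≤ 1)
    (h1 : ∀ n j, estar n (e j) = if n = j then 1 else 0)
    (h2 : ∀ n, ∀ N ∈ F, estar n (chi N) = if n ∈ N then 1 else 0)
    (hdense : Dense (Submodule.span ℝ (Set.range e ∪ chi '' F) : Set X)) :
    (∀ y : ℕ → X →L[ℝ] ℝ, (∀ i, y i ∈ convexHull ℝ (Set.range estar)) →
      ¬ ∀ x : X, Tendsto (fun i => y i x) atTop (𝓝 0)) ∧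
    ¬ (∀ C : Set (X →L[ℝ] ℝ), Convex ℝ C → Bornology.IsBounded C →
        ∀ φ : X →L[ℝ] ℝ,
          StrongDual.toWeakDual φ ∈
            closure ((fun ψ : X →L[ℝ] ℝ => StrongDual.toWeakDual ψ) '' C) →
          ∃ u : ℕ → X →L[ℝ] ℝ, (∀ n, u n ∈ C) ∧
            ∀ x : X, Tendsto (fun n => u n x) atTop (𝓝 (φ x))) := by
  have hnotNull : ∀ y : ℕ → X →L[ℝ] ℝ, (∀ i, y i ∈ convexHull ℝ (Set.range estar)) →
      ¬ ∀ x, Tendsto (fun i => y i x) atTop (𝓝 0) := fun _ =>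
    not_forall_tendsto_zero_of_mem_convexHull (fun l hl => hmat l hl.1 hl.2.1 hl.2.2) h1 h2
  refine ⟨hnotNull, fun hE => ?_⟩
  have := cofiniteAwayFrom_neBot hFinf hmem hAD
  have hzero : StrongDual.toWeakDual 0 ∈
      closure (StrongDual.toWeakDual '' convexHull ℝ (Set.range estar)) :=
    StrongDual.toWeakDual_mem_closure_image_of_tendsto
      (by simpa using tendsto_cofiniteAwayFrom_apply ⟨1, hnorm1⟩ h1 h2 hdense)
      (Eventually.of_forall fun n => subset_convexHull ℝ _ (Set.mem_range_self n))
  have hbdd : Bornology.IsBounded (convexHull ℝ (Set.range estar)) :=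
    isBounded_convexHull.2 (isBounded_iff_forall_norm_le.2 ⟨1, Set.forall_mem_range.2 hnorm1⟩)
  obtain ⟨u, huC, hu⟩ := hE _ (convex_convexHull ℝ _) hbdd 0 hzero
  exact hnotNull u huC (by simpa using hu)

/-- Theorem 4.5, with the structure of `JL₂(F₋)` axiomatized as in the preliminaries:
`F₋` is an infinite almost disjoint family such that every convex null matrix
`(λ_{i,j})` admits `N ∈ F₋` with `limsup_i ∑_{j ∈ N} λ_{i,j} > 0`. Then no sequence
in `C = co({estar n : n ∈ ℕ})` is weak*-null and, since `0` belongs to the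
weak*-closure of `C`, the space fails property (E). -/
theorem stmt17 {X : Type*} [NormedAddCommGroup X] [NormedSpace ℝ X] [CompleteSpace X]
    (F : Set (Set ℕ)) (hFinf : F.Infinite)
    (hmem : ∀ N ∈ F, N.Infinite)
    (hAD : ∀ N ∈ F, ∀ N' ∈ F, N ≠ N' → (N ∩ N').Finite)
    (hmat : ∀ l : ℕ → ℕ → ℝ, (∀ i j, 0 ≤ l i j) → (∀ i, HasSum (l i) 1) →
      (∀ j, Tendsto (fun i => l i j) atTop (𝓝 0)) →
      ∃ N ∈ F, 0 < Filter.limsup (fun i => ∑' j, Set.indicator N (l i) j) atTop)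
    (e : ℕ → X) (chi : Set ℕ → X)
    (estar : ℕ → X →L[ℝ] ℝ) (Nstar : Set ℕ → X →L[ℝ] ℝ)
    (hnorm1 : ∀ n, ‖estar n‖ ≤ 1) (hnorm2 : ∀ N ∈ F, ‖Nstar N‖ ≤ 1)
    (h1 : ∀ n j, estar n (e j) = if n = j then 1 else 0)
    (h2 : ∀ n, ∀ N ∈ F, estar n (chi N) = if n ∈ N then 1 else 0)
    (h3 : ∀ N ∈ F, ∀ j, Nstar N (e j) = 0)
    (h4 : ∀ N ∈ F, ∀ N' ∈ F, Nstar N (chi N') = if N = N' then 1 else 0)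
    (hdense : Dense (Submodule.span ℝ (Set.range e ∪ chi '' F) : Set X)) :
    (∀ y : ℕ → X →L[ℝ] ℝ, (∀ i, y i ∈ convexHull ℝ (Set.range estar)) →
      ¬ ∀ x : X, Tendsto (fun i => y i x) atTop (𝓝 0)) ∧
    ¬ (∀ C : Set (X →L[ℝ] ℝ), Convex ℝ C → Bornology.IsBounded C →
        ∀ φ : X →L[ℝ] ℝ,
          StrongDual.toWeakDual φ ∈
            closure ((fun ψ : X →L[ℝ] ℝ => StrongDual.toWeakDual ψ) '' C) →
          ∃ u : ℕ → X →L[ℝ] ℝ, (∀ n, u n ∈ C) ∧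
            ∀ x : X, Tendsto (fun n => u n x) atTop (𝓝 (φ x))) :=
  stmt17_general F hFinf hmem hAD hmat e chi estar hnorm1 h1 h2 hdense
end

section
/- Every Grothendieck space $X$ has property $(\mathcal{P})$: for every convex bounded set $C\subseteq X^*$, the set $S_1(C)$ of weak*-limits of sequences from $C$ is norm-closed. -/
open Filter Topology

/-- The set of weak*-limits of sequences from `C`. -/
def S1 {X : Type*} [NormedAddCommGroup X] [NormedSpace ℝ X]
    (C : Set (X →L[ℝ] ℝ)) : Set (X →L[ℝ] ℝ) :=
  {φ | ∃ u : ℕ → X →L[ℝ] ℝ, (∀ n, u n ∈ C) ∧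
    ∀ y : X, Tendsto (fun n => u n y) atTop (𝓝 (φ y))}

/-- Every Grothendieck space (every weak*-convergent sequence in `X*` is weakly
convergent) has property (P): for every convex bounded `C ⊆ X*`, the set `S₁(C)` of
weak*-limits of sequences from `C` is norm-closed. -/
theorem stmt19 {X : Type*} [NormedAddCommGroup X] [NormedSpace ℝ X] [CompleteSpace X]
    (hG : ∀ (u : ℕ → X →L[ℝ] ℝ) (φ : X →L[ℝ] ℝ),
      (∀ x : X, Tendsto (fun n => u n x) atTop (𝓝 (φ x))) →
      ∀ F : (X →L[ℝ] ℝ) →L[ℝ] ℝ, Tendsto (fun n => F (u n)) atTop (𝓝 (F φ))) :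
    ∀ C : Set (X →L[ℝ] ℝ), Convex ℝ C → Bornology.IsBounded C → IsClosed (S1 C) := by
  intro C hC _hB
  have key : S1 C = closure C := by
    ext φ
    constructor
    · rintro ⟨u, huC, hu⟩
      by_contra hφ
      obtain ⟨F, c, hFC, hFφ⟩ :=
        geometric_hahn_banach_closed_point (hC.closure) isClosed_closure hφ
      have hlim := hG u φ hu F
      have : F φ ≤ c := by
        refine le_of_tendsto hlim (Eventually.of_forall fun n => ?_)
        exact le_of_lt (hFC (u n) (subset_closure (huC n)))
      linarith
    · intro hφ
      obtain ⟨u, huC, hu⟩ := mem_closure_iff_seq_limit.mp hφ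
      exact ⟨u, huC, fun y => ((ContinuousLinearMap.apply ℝ ℝ y).continuous.tendsto φ).comp hu⟩
  rw [key]
  exact isClosed_closure
end
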